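/- arXiv:1012.4086 — 2 statements merged into one kernel-verified Lean document; each statement's English description precedes it below -/
import Mathlib

section
/- Fix an integer d ≥ 1. Let T(d) ⊆ ℤ × ℤ be the union over all positive integers m of the sets { (⌊(d*y − x + d − 2 : ℚ)/m⌋, ⌊(−y − 2 : ℚ)/m⌋) : x, y ∈ ℤ, 0 ≤ x < m, 0 ≤ y < m }. Then T(d) = { (j,−1) : j ∈ ℤ, −1 ≤ j ≤ d−1 } ∪ { (d−1,−2), (d−2,−2) }. -/
/-! The second coordinate `q₄ = ⌊(-y - 2)/m⌋` can only be `-1` or `-2`, and it is `-2` exactly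
when `y = m - 1`. In each case the range of `d y - x + d - 2` pins `q₃ = ⌊(d y - x + d - 2)/m⌋` to
`[-1, d - 1]` or to `{d - 2, d - 1}` respectively. Conversely every pair in the target is realized
by an explicit `(m, x, y)`. -/

section FloorIntCastDiv

variable {K : Type*} [Field K] [LinearOrder K] [IsStrictOrderedRing K] [FloorRing K] {a m : ℤ}

theorem Int.le_floor_intCast_div_iff (hm : 0 < m) (l : ℤ) :
    l ≤ ⌊(a : K) / m⌋ ↔ l * m ≤ a := by
  rw [Int.le_floor, le_div_iff₀ (by exact_mod_cast hm)]
  exact_mod_cast Iff.rfl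

theorem Int.floor_intCast_div_lt_iff (hm : 0 < m) (h : ℤ) :
    ⌊(a : K) / m⌋ < h ↔ a < h * m := by
  rw [Int.floor_lt, div_lt_iff₀ (by exact_mod_cast hm)]
  exact_mod_cast Iff.rfl

theorem Int.floor_intCast_div_eq {q : ℤ} (hlo : q * m ≤ a) (hhi : a < (q + 1) * m) :
    ⌊(a : K) / m⌋ = q := by
  have hm : 0 < m := by linarith
  refine le_antisymm ?_ ((Int.le_floor_intCast_div_iff hm q).2 hlo)
  exact Int.lt_add_one_iff.1 ((Int.floor_intCast_div_lt_iff hm _).2 hhi)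

end FloorIntCastDiv

/-- Thomsen's coefficients `(q₃, q₄)` of the summand of `F_{m*} O(K_X)` attached to `u = (x, y)`. -/
def thomsenPair (d m x y : ℤ) : ℤ × ℤ :=
  (⌊((d * y - x + d - 2 : ℤ) : ℚ) / (m : ℚ)⌋, ⌊((-y - 2 : ℤ) : ℚ) / (m : ℚ)⌋)

def canonicalSummands (d : ℤ) : Set (ℤ × ℤ) :=
  {p : ℤ × ℤ | ∃ j : ℤ, -1 ≤ j ∧ j ≤ d - 1 ∧ p = (j, -1)} ∪
    ({(d - 1, -2), (d - 2, -2)} : Set (ℤ × ℤ))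

theorem thomsenPair_mem_canonicalSummands {d m x y : ℤ} (hd : 1 ≤ d) (hm : 0 < m) (hx₀ : 0 ≤ x) (hxm : x < m)
    (hy₀ : 0 ≤ y) (hym : y < m) : thomsenPair d m x y ∈ canonicalSummands d := by
  unfold thomsenPair canonicalSummands
  generalize hq₃ : ⌊((d * y - x + d - 2 : ℤ) : ℚ) / (m : ℚ)⌋ = q₃
  generalize hq₄ : ⌊((-y - 2 : ℤ) : ℚ) / (m : ℚ)⌋ = q₄
  have hq₃_lt (h : ℤ) : q₃ < h ↔ d * y - x + d - 2 < h * m :=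
    hq₃ ▸ Int.floor_intCast_div_lt_iff hm h
  have hq₃_ge (l : ℤ) : l ≤ q₃ ↔ l * m ≤ d * y - x + d - 2 :=
    hq₃ ▸ Int.le_floor_intCast_div_iff hm l
  have hq₄_lt (h : ℤ) : q₄ < h ↔ -y - 2 < h * m := hq₄ ▸ Int.floor_intCast_div_lt_iff hm h
  have hq₄_ge (l : ℤ) : l ≤ q₄ ↔ l * m ≤ -y - 2 := hq₄ ▸ Int.le_floor_intCast_div_iff hm l
  have hq₄_neg : q₄ < 0 := (hq₄_lt 0).2 (by linarith)
  by_cases hy : y ≤ m - 2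
  · have hq₄ : q₄ = -1 := le_antisymm (by omega) ((hq₄_ge (-1)).2 (by linarith))
    have hq₃_lo : -1 ≤ q₃ := (hq₃_ge (-1)).2 (by nlinarith)
    have hq₃_hi : q₃ < d := (hq₃_lt d).2 (by nlinarith)
    exact Or.inl ⟨q₃, hq₃_lo, by omega, by rw [hq₄]⟩
  · obtain rfl : m = y + 1 := by omega
    have hq₄ : q₄ = -2 := le_antisymm (by linarith [(hq₄_lt (-1)).2 (by linarith)])
      ((hq₄_ge (-2)).2 (by linarith))
    have hq₃_lo : d - 2 ≤ q₃ := (hq₃_ge (d - 2)).2 (by linarith)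
    have hq₃_hi : q₃ < d := (hq₃_lt d).2 (by linarith)
    rcases (by omega : q₃ = d - 1 ∨ q₃ = d - 2) with rfl | rfl <;> simp [hq₄]

theorem thomsenPair_eq {d m x y q₃ q₄ : ℤ}
    (h₃ : q₃ * m ≤ d * y - x + d - 2 ∧ d * y - x + d - 2 < (q₃ + 1) * m)
    (h₄ : q₄ * m ≤ -y - 2 ∧ -y - 2 < (q₄ + 1) * m) :
    thomsenPair d m x y = (q₃, q₄) :=
  Prod.ext (Int.floor_intCast_div_eq h₃.1 h₃.2) (Int.floor_intCast_div_eq h₄.1 h₄.2)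

theorem exists_thomsenPair_eq_of_mem_canonicalSummands {d : ℤ} (hd : 1 ≤ d) {p : ℤ × ℤ}
    (hp : p ∈ canonicalSummands d) :
    ∃ m : ℤ, 0 < m ∧ ∃ x y : ℤ, 0 ≤ x ∧ x < m ∧ 0 ≤ y ∧ y < m ∧ p = thomsenPair d m x y := by
  rcases hp with ⟨j, hj₀, hjd, rfl⟩ | rfl | rfl
  · rcases (by omega : j ≤ d - 2 ∨ j = d - 1) with hj | rfl
    · exact ⟨d + 1, by omega, d - 1 - j, j + 1, by omega, by omega, by omega, by omega,
        (thomsenPair_eq ⟨by linarith, by linarith⟩ ⟨by linarith, by linarith⟩).symm⟩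
    · exact ⟨d + 2, by omega, 0, d, by omega, by omega, by omega, by omega,
        (thomsenPair_eq ⟨by linarith, by linarith⟩ ⟨by linarith, by linarith⟩).symm⟩
  · exact ⟨2, by omega, 0, 1, by omega, by omega, by omega, by omega,
      (thomsenPair_eq ⟨by linarith, by linarith⟩ ⟨by linarith, by linarith⟩).symm⟩
  · exact ⟨1, by omega, 0, 0, by omega, by omega, by omega, by omega,
      (thomsenPair_eq ⟨by linarith, by linarith⟩ ⟨by linarith, by linarith⟩).symm⟩

/-- §4.1: the set `𝔇(K_X)` of Thomsen coefficient pairs on the Hirzebruch surface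
`Σ_d`, `d ≥ 1`. -/
theorem stmt_7 (d : ℤ) (hd : 1 ≤ d) :
    {p : ℤ × ℤ | ∃ m : ℤ, 0 < m ∧ ∃ x y : ℤ,
        0 ≤ x ∧ x < m ∧ 0 ≤ y ∧ y < m ∧
        p = (⌊((d * y - x + d - 2 : ℤ) : ℚ) / (m : ℚ)⌋,
             ⌊((-y - 2 : ℤ) : ℚ) / (m : ℚ)⌋)} =
    {p : ℤ × ℤ | ∃ j : ℤ, -1 ≤ j ∧ j ≤ d - 1 ∧ p = (j, -1)} ∪
      ({(d - 1, -2), (d - 2, -2)} : Set (ℤ × ℤ)) := by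
  ext p
  constructor
  · rintro ⟨m, hm, x, y, hx₀, hxm, hy₀, hym, rfl⟩
    exact thomsenPair_mem_canonicalSummands hd hm hx₀ hxm hy₀ hym
  · exact exists_thomsenPair_eq_of_mem_canonicalSummands hd
end

section
/- Let S ⊆ ℤ⁴ be the union over all positive integers m of the sets { (⌊(y − x : ℚ)/m⌋, ⌊(−x : ℚ)/m⌋, ⌊(−y : ℚ)/m⌋, ⌊(x − y : ℚ)/m⌋) : x, y ∈ ℤ, 0 ≤ x < m, 0 ≤ y < m }. Then S = { (0,0,0,0), (0,0,−1,−1), (−1,−1,0,0), (0,−1,−1,0), (−1,−1,−1,0), (0,−1,−1,−1) }; in particular S has exactly 6 elements. -/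
/-! Since every numerator lies in `[-m, m)`, each floor is `-1` or `0` according to the sign of
the numerator, so the quadruple only depends on whether `x = 0`, whether `y = 0` and on the order
of `x` and `y`. The six patterns this allows are all realised already for `m = 3`. -/

lemma Rat.floor_intCast_div_intCast_of_pos (a : ℤ) {m : ℤ} (hm : 0 < m) :
    ⌊(a : ℚ) / (m : ℚ)⌋ = a / m := by
  lift m to ℕ using hm.le
  exact_mod_cast Rat.floor_intCast_div_natCast a m

lemma Int.ediv_eq_ite_of_neg_le_of_lt {a m : ℤ} (h₁ : -m ≤ a) (h₂ : a < m) :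
    a / m = if a < 0 then -1 else 0 := by
  split_ifs with ha
  · exact Int.ediv_eq_neg_one_of_neg_of_le ha (by omega)
  · exact Int.ediv_eq_zero_of_lt (by omega) h₂

/-- The coefficients `(q₃, q₄, q₅, q₆)` of the summand attached to `u = (x, y)`. -/
def thomsenCoeffs (m x y : ℤ) : ℤ × ℤ × ℤ × ℤ :=
  (⌊((y - x : ℤ) : ℚ) / (m : ℚ)⌋, ⌊((-x : ℤ) : ℚ) / (m : ℚ)⌋,
    ⌊((-y : ℤ) : ℚ) / (m : ℚ)⌋, ⌊((x - y : ℤ) : ℚ) / (m : ℚ)⌋)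

def summandCoeffs : Set (ℤ × ℤ × ℤ × ℤ) :=
  {(0, 0, 0, 0), (0, 0, -1, -1), (-1, -1, 0, 0), (0, -1, -1, 0),
    (-1, -1, -1, 0), (0, -1, -1, -1)}

lemma thomsenCoeffs_mem_summandCoeffs {m x y : ℤ} (hx₀ : 0 ≤ x) (hxm : x < m)
    (hy₀ : 0 ≤ y) (hym : y < m) : thomsenCoeffs m x y ∈ summandCoeffs := by
  have hm : 0 < m := by omega
  simp only [thomsenCoeffs, Rat.floor_intCast_div_intCast_of_pos _ hm]
  rw [Int.ediv_eq_ite_of_neg_le_of_lt (a := y - x) (by omega) (by omega),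
    Int.ediv_eq_ite_of_neg_le_of_lt (a := -x) (by omega) (by omega),
    Int.ediv_eq_ite_of_neg_le_of_lt (a := -y) (by omega) (by omega),
    Int.ediv_eq_ite_of_neg_le_of_lt (a := x - y) (by omega) (by omega)]
  simp only [summandCoeffs, Set.mem_insert_iff, Set.mem_singleton_iff, Prod.mk.injEq]
  split_ifs <;> omega

lemma summandCoeffs_subset_thomsenCoeffs_three :
    summandCoeffs ⊆ {p | ∃ x y, 0 ≤ x ∧ x < 3 ∧ 0 ≤ y ∧ y < 3 ∧ p = thomsenCoeffs 3 x y} := by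
  simp only [summandCoeffs, Set.insert_subset_iff, Set.singleton_subset_iff, Set.mem_ofPred_eq,
    thomsenCoeffs, Rat.floor_intCast_div_intCast_of_pos _ (by norm_num : (0:ℤ) < 3)]
  refine ⟨⟨0, 0, ?_⟩, ⟨0, 1, ?_⟩, ⟨1, 0, ?_⟩, ⟨1, 1, ?_⟩, ⟨2, 1, ?_⟩, ⟨1, 2, ?_⟩⟩ <;> decide

lemma ncard_summandCoeffs : summandCoeffs.ncard = 6 := by
  rw [summandCoeffs, Set.ncard_eq_toFinset_card']
  decide

theorem thomsenCoeffs_image :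
    {p : ℤ × ℤ × ℤ × ℤ | ∃ m : ℤ, 0 < m ∧ ∃ x y : ℤ,
        0 ≤ x ∧ x < m ∧ 0 ≤ y ∧ y < m ∧ p = thomsenCoeffs m x y} = summandCoeffs := by
  refine Set.Subset.antisymm ?_ fun p hp => ?_
  · rintro _ ⟨m, -, x, y, hx₀, hxm, hy₀, hym, rfl⟩
    exact thomsenCoeffs_mem_summandCoeffs hx₀ hxm hy₀ hym
  · exact ⟨3, by norm_num, summandCoeffs_subset_thomsenCoeffs_three hp⟩

/-- §4.2: the set `𝔇` of Thomsen coefficient quadruples on the maximal toric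
del Pezzo surface `Y₃`. -/
theorem stmt_8 :
    {p : ℤ × ℤ × ℤ × ℤ | ∃ m : ℤ, 0 < m ∧ ∃ x y : ℤ,
        0 ≤ x ∧ x < m ∧ 0 ≤ y ∧ y < m ∧
        p = (⌊((y - x : ℤ) : ℚ) / (m : ℚ)⌋, ⌊((-x : ℤ) : ℚ) / (m : ℚ)⌋,
             ⌊((-y : ℤ) : ℚ) / (m : ℚ)⌋, ⌊((x - y : ℤ) : ℚ) / (m : ℚ)⌋)} =
      ({(0, 0, 0, 0), (0, 0, -1, -1), (-1, -1, 0, 0), (0, -1, -1, 0),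
        (-1, -1, -1, 0), (0, -1, -1, -1)} : Set (ℤ × ℤ × ℤ × ℤ)) ∧
    Set.ncard {p : ℤ × ℤ × ℤ × ℤ | ∃ m : ℤ, 0 < m ∧ ∃ x y : ℤ,
        0 ≤ x ∧ x < m ∧ 0 ≤ y ∧ y < m ∧
        p = (⌊((y - x : ℤ) : ℚ) / (m : ℚ)⌋, ⌊((-x : ℤ) : ℚ) / (m : ℚ)⌋,
             ⌊((-y : ℤ) : ℚ) / (m : ℚ)⌋, ⌊((x - y : ℤ) : ℚ) / (m : ℚ)⌋)} = 6 :=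
  ⟨thomsenCoeffs_image, thomsenCoeffs_image ▸ ncard_summandCoeffs⟩
end
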